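/- arXiv:1902.03577 — 3 statements merged into one kernel-verified Lean document; each statement's English description precedes it below -/
import Mathlib

section
/- (Equidistribution of lacunary Walsh partial sums with Rademacher partial sums) Let q ≥ 2 and let (w_{n_k}) be a q-lacunary sequence of Walsh functions. Then for every M ≥ 1 and every square-summable real sequence (a_k), the functions W_M := Σ_{k=1}^M a_k w_{n_k} and R_M := Σ_{k=1}^M a_k r_k have the same distribution function, i.e. m({x ∈ [0,1] : |W_M(x)| > λ}) = m({x ∈ [0,1] : |R_M(x)| > λ}) for all λ > 0. -/
open MeasureTheory Real Set Filter

/-- The Rademacher functions `r_k(t) = sign (sin (2^k π t))`. -/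
noncomputable def rademacher (k : ℕ) (t : ℝ) : ℝ :=
  Real.sign (Real.sin (2 ^ k * Real.pi * t))

/-- The Walsh functions in Paley's numbering: `w_k = ∏ r_{i+1}^{bit_i(k)}`. -/
noncomputable def walsh (k : ℕ) (t : ℝ) : ℝ :=
  ∏ i ∈ Finset.range k, if Nat.testBit k i then rademacher (i + 1) t else 1

/-- A sequence `(w_{n k})` of Walsh functions is `q`-lacunary if the `n k` are
positive integers and `n (k+1) / n k ≥ q` for all `k`. -/
def WalshLacunary (q : ℝ) (n : ℕ → ℕ) : Prop :=
  (∀ k, 1 ≤ n k) ∧ ∀ k, q * (n k : ℝ) ≤ (n (k + 1) : ℝ)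

/-- The `L^p` norm of a function on `[0,1]`. -/
noncomputable def lpNorm (p : ℝ) (f : ℝ → ℝ) : ℝ :=
  (∫ t in Set.Icc (0:ℝ) 1, |f t| ^ p) ^ (1 / p)

/-!
Off the dyadic rationals of level `N`, the Rademacher function `r_{i+1}` equals `(-1)` to the
`(i+1)`-st binary digit, so for `n < 2 ^ N` the Walsh function `w_n` is `(-1)` raised to a
`ZMod 2`-linear form in the first `N` digits, with coefficients the bits of `n`. The first `N`
digits are uniformly distributed on `(ZMod 2)^N`, hence `(w_{n_k})_{k<M}` is distributed as the
image of the uniform distribution under the bit matrix of `(n_k)`. For `q ≥ 2` the leading bits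
`log₂ n_k` strictly increase, so this matrix has a unitriangular `M × M` minor and is
surjective, and a surjective homomorphism of finite groups maps the uniform distribution to the
uniform one. Thus `(w_{n_k})_{k<M}` is uniform on `{±1}^M`, as is `(r_{k+1})_{k<M} = (w_{2^k})`.
-/

open scoped Finset

lemma Real.sign_sin_pi_mul {y : ℝ} (hy : 0 ≤ y) (hyn : ∀ m : ℕ, y ≠ m) :
    Real.sign (sin (π * y)) = (-1) ^ ⌊y⌋₊ := by
  set j := ⌊y⌋₊
  have hjy : (j : ℝ) < y := (Nat.floor_le hy).lt_of_ne (hyn j).symm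
  have hyj : y < j + 1 := Nat.lt_floor_add_one y
  have hshift : sin (π * y) = (-1) ^ j * sin (π * (y - j)) := by
    rw [← sin_add_nat_mul_pi]; ring_nf
  have hpos : 0 < sin (π * (y - j)) :=
    sin_pos_of_pos_of_lt_pi (mul_pos pi_pos (by linarith)) (by nlinarith [pi_pos])
  rw [hshift]
  rcases neg_one_pow_eq_or ℝ j with h | h <;> rw [h]
  · rw [one_mul, sign_of_pos hpos]
  · rw [neg_one_mul, sign_of_neg (neg_neg_of_pos hpos)]

lemma Nat.testBit_log_two {m : ℕ} (hm : m ≠ 0) : m.testBit (Nat.log 2 m) = true := by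
  rw [← Nat.log2_eq_log_two]; exact Nat.testBit_log2 hm

lemma Nat.testBit_eq_false_of_log_lt {m i : ℕ} (hi : Nat.log 2 m < i) : m.testBit i = false :=
  Nat.testBit_lt_two_pow ((Nat.lt_pow_succ_log_self one_lt_two m).trans_le
    (Nat.pow_le_pow_right two_pos hi))

lemma prod_range_ite_testBit_of_le {β : Type*} [CommMonoid β] {m K K' : ℕ} (hK : K ≤ K')
    (hm : m < 2 ^ K) (f : ℕ → β) :
    ∏ i ∈ Finset.range K', (if m.testBit i then f i else 1) =
      ∏ i ∈ Finset.range K, (if m.testBit i then f i else 1) := by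
  refine (Finset.prod_subset (Finset.range_subset_range.2 hK) fun i _ hi => ?_).symm
  have hmi : m < 2 ^ i := hm.trans_le (Nat.pow_le_pow_right two_pos (by simpa using hi))
  rw [Nat.testBit_lt_two_pow hmi, if_neg Bool.false_ne_true]

open Finset in
theorem AddMonoidHom.card_filter_comp_mul_card {G H : Type*} [AddGroup G] [AddGroup H]
    [Fintype G] [Fintype H] [DecidableEq H] (L : G →+ H) (hL : Function.Surjective L)
    (P : H → Prop) [DecidablePred P] :
    #{g | P (L g)} * Fintype.card H = #{h | P h} * Fintype.card G := by
  have hfiber : ∀ h, #{g | L g = h} = #{g | L g = 0} := by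
    intro h
    obtain ⟨g₀, rfl⟩ := hL h
    refine card_nbij' (· - g₀) (· + g₀) ?_ ?_ ?_ ?_ <;> intro g <;> simp [sub_eq_zero]
  have hpreimage : ∀ t : Finset H, #{g | L g ∈ t} = #t * #{g | L g = 0} := fun t => by
    rw [← sum_card_fiberwise_eq_card_filter, sum_congr rfl fun h _ => hfiber h, sum_const,
      smul_eq_mul]
  have hP := hpreimage {h | P h}
  have hG := hpreimage univ
  simp only [Finset.mem_filter, Finset.mem_univ, true_and, filter_true, card_univ] at hP hG
  rw [hP, hG, mul_comm (Fintype.card H), mul_assoc]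

theorem Matrix.mulVec_surjective_of_isUnit_submatrix {m n R : Type*} [Fintype m] [DecidableEq m]
    [Fintype n] [DecidableEq n] [CommRing R] (B : Matrix m n R) (e : m → n)
    (h : IsUnit (B.submatrix id e)) : Function.Surjective B.mulVec := by
  intro v
  obtain ⟨c, hc⟩ := Matrix.mulVec_surjective_iff_isUnit.2 h v
  refine ⟨((1 : Matrix n n R).submatrix (Equiv.refl n) e).mulVec c, ?_⟩
  rwa [Matrix.mulVec_mulVec, Matrix.mul_submatrix_one]

lemma mem_Ico_div_iff_floor_mul_eq {m : ℕ} (hm : m ≠ 0) (j : ℕ) (x : ℝ) :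
    x ∈ Ico (j / m : ℝ) ((j + 1) / m) ↔ 0 ≤ x ∧ ⌊m * x⌋₊ = j := by
  have hm' : (0 : ℝ) < m := by positivity
  constructor
  · rintro ⟨hjx, hxj⟩
    have hx : 0 ≤ x := le_trans (by positivity) hjx
    refine ⟨hx, (Nat.floor_eq_iff (by positivity)).2 ⟨?_, ?_⟩⟩
    · rwa [div_le_iff₀' hm'] at hjx
    · rwa [lt_div_iff₀' hm'] at hxj
  · rintro ⟨hx, hj⟩
    obtain ⟨hjx, hxj⟩ := (Nat.floor_eq_iff (by positivity)).1 hj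
    exact ⟨(div_le_iff₀' hm').2 hjx, (lt_div_iff₀' hm').2 hxj⟩

lemma volume_setOf_floor_mul {m : ℕ} (hm : m ≠ 0) (P : ℕ → Prop) [DecidablePred P] :
    volume {x ∈ Icc (0 : ℝ) 1 | P ⌊m * x⌋₊} = #{j ∈ Finset.range m | P j} / m := by
  have hm' : (0 : ℝ) < m := by positivity
  have hunion : {x ∈ Ico (0 : ℝ) 1 | P ⌊m * x⌋₊} =
      ⋃ j ∈ ({j ∈ Finset.range m | P j} : Finset ℕ), Ico (j / m : ℝ) ((j + 1) / m) := by
    ext x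
    simp only [Set.mem_ofPred_eq, Set.mem_iUnion, exists_prop, Finset.mem_filter,
      Finset.mem_range, mem_Ico_div_iff_floor_mul_eq hm]
    constructor
    · rintro ⟨⟨hx0, hx1⟩, hP⟩
      exact ⟨_, ⟨(Nat.floor_lt (by positivity)).2 (by nlinarith), hP⟩, hx0, rfl⟩
    · rintro ⟨j, ⟨hj, hP⟩, hx0, rfl⟩
      have hmx := (Nat.floor_lt (by positivity)).1 hj
      exact ⟨⟨hx0, by nlinarith⟩, hP⟩
  have hdisj : ((({j ∈ Finset.range m | P j} : Finset ℕ)) : Set ℕ).PairwiseDisjoint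
      fun j => Ico (j / m : ℝ) ((j + 1) / m) := by
    intro i _ j _ hij
    refine Set.disjoint_left.2 fun x hi hj => hij ?_
    rw [mem_Ico_div_iff_floor_mul_eq hm] at hi hj
    exact hi.2.symm.trans hj.2
  have hae : {x ∈ Icc (0 : ℝ) 1 | P ⌊m * x⌋₊} =ᵐ[volume] {x ∈ Ico (0 : ℝ) 1 | P ⌊m * x⌋₊} :=
    Ico_ae_eq_Icc.symm.inter (ae_eq_refl {x : ℝ | P ⌊m * x⌋₊})
  rw [measure_congr hae, hunion, measure_biUnion_finset hdisj fun _ _ => measurableSet_Ico]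
  have hlength : ∀ j : ℕ, ((j + 1) / m - j / m : ℝ) = 1 / m := fun j => by ring
  simp_rw [Real.volume_Ico, hlength]
  rw [Finset.sum_const, nsmul_eq_mul, ENNReal.ofReal_div_of_pos hm', ENNReal.ofReal_one,
    ENNReal.ofReal_natCast, mul_one_div]

lemma rademacher_eq_neg_one_pow_floor (k : ℕ) {x : ℝ} (hx : 0 ≤ x)
    (hxk : ∀ m : ℕ, 2 ^ k * x ≠ m) : rademacher k x = (-1) ^ ⌊2 ^ k * x⌋₊ := by
  rw [rademacher, mul_comm _ π, mul_assoc]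
  exact sign_sin_pi_mul (by positivity) hxk

lemma rademacher_eq_neg_one_pow_div {N i : ℕ} (hi : i < N) {x : ℝ} (hx : 0 ≤ x)
    (hxN : ∀ m : ℕ, 2 ^ N * x ≠ m) :
    rademacher (i + 1) x = (-1) ^ (⌊2 ^ N * x⌋₊ / 2 ^ (N - 1 - i)) := by
  have hsplit : (2 : ℝ) ^ N * x = ((2 ^ (N - 1 - i) : ℕ) : ℝ) * (2 ^ (i + 1) * x) := by
    rw [Nat.cast_pow, Nat.cast_ofNat, ← mul_assoc, ← pow_add]
    congr 2; omega
  have hpos : (0 : ℝ) < (2 ^ (N - 1 - i) : ℕ) := by positivity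
  rw [hsplit, ← Nat.floor_div_natCast, mul_div_cancel_left₀ _ hpos.ne']
  refine rademacher_eq_neg_one_pow_floor _ hx fun m hm => hxN (2 ^ (N - 1 - i) * m) ?_
  rw [hsplit, hm]; push_cast; ring

lemma walsh_eq_prod_range {m N : ℕ} (hm : m < 2 ^ N) (t : ℝ) :
    walsh m t = ∏ i ∈ Finset.range N, if m.testBit i then rademacher (i + 1) t else 1 := by
  rw [walsh]
  rcases le_total m N with h | h
  · exact (prod_range_ite_testBit_of_le h Nat.lt_two_pow_self _).symm
  · exact prod_range_ite_testBit_of_le h hm _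

lemma walsh_two_pow (k : ℕ) (t : ℝ) : walsh (2 ^ k) t = rademacher (k + 1) t := by
  rw [walsh_eq_prod_range (Nat.pow_lt_pow_right one_lt_two k.lt_succ_self)]
  simp [Nat.testBit_two_pow]

lemma walsh_eq_neg_one_pow_sum {m N : ℕ} (hm : m < 2 ^ N) {x : ℝ} (hx : 0 ≤ x)
    (hxN : ∀ j : ℕ, 2 ^ N * x ≠ j) :
    walsh m x = (-1) ^ ∑ i ∈ Finset.range N,
      if m.testBit i then ⌊2 ^ N * x⌋₊ / 2 ^ (N - 1 - i) else 0 := by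
  rw [walsh_eq_prod_range hm, ← Finset.prod_pow_eq_pow_sum]
  refine Finset.prod_congr rfl fun i hi => ?_
  split_ifs
  · exact rademacher_eq_neg_one_pow_div (Finset.mem_range.1 hi) hx hxN
  · rfl

def bitMatrix {M : ℕ} (n : Fin M → ℕ) (N : ℕ) : Matrix (Fin M) (Fin N) (ZMod 2) :=
  Matrix.of fun k i => if (n k).testBit i then 1 else 0

/-- The columns at the leading bits `Nat.log 2 (n k)` form a unitriangular minor. -/
lemma bitMatrix_mulVec_surjective {M N : ℕ} (n : Fin M → ℕ) (hpos : ∀ k, n k ≠ 0)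
    (hlog : StrictMono fun k => Nat.log 2 (n k)) (hN : ∀ k, n k < 2 ^ N) :
    Function.Surjective (bitMatrix n N).mulVec := by
  let leadingBit : Fin M → Fin N := fun k =>
    ⟨Nat.log 2 (n k), Nat.log_lt_of_lt_pow (hpos k) (hN k)⟩
  refine (bitMatrix n N).mulVec_surjective_of_isUnit_submatrix leadingBit ?_
  have hlower : ((bitMatrix n N).submatrix id leadingBit).IsLowerTriangular := by
    intro k k' hkk'
    simp [leadingBit, bitMatrix,
      Nat.testBit_eq_false_of_log_lt (hlog (OrderDual.toDual_lt_toDual.1 hkk'))]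
  rw [Matrix.isUnit_iff_isUnit_det, Matrix.det_of_isLowerTriangular _ hlower]
  simp [leadingBit, bitMatrix, Nat.testBit_log_two (hpos _)]

/-- Entry `i` is the `(i+1)`-st binary digit of `j / 2 ^ N`: the bits of `j` are read from the
most significant one. -/
def binaryDigits (N j : ℕ) : Fin N → ZMod 2 := fun i => ((j / 2 ^ (N - 1 - i) : ℕ) : ZMod 2)

lemma binaryDigits_injOn (N : ℕ) : Set.InjOn (binaryDigits N) (Finset.range (2 ^ N)) := by
  intro j hj j' hj' hjj'
  refine Nat.eq_of_testBit_eq fun i => ?_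
  by_cases hi : i < N
  · have hdigit := congrFun hjj' ⟨N - 1 - i, by omega⟩
    simp only [binaryDigits, show N - 1 - (N - 1 - i) = i by omega,
      ZMod.natCast_eq_natCast_iff'] at hdigit
    simp only [Nat.testBit_eq_decide_div_mod_eq, hdigit]
  · have hpow : 2 ^ N ≤ 2 ^ i := Nat.pow_le_pow_right two_pos (not_lt.1 hi)
    simp only [Finset.coe_range, Set.mem_Iio] at hj hj'
    rw [Nat.testBit_lt_two_pow (hj.trans_le hpow), Nat.testBit_lt_two_pow (hj'.trans_le hpow)]

open Finset in
lemma card_filter_binaryDigits (N : ℕ) (P : (Fin N → ZMod 2) → Prop) [DecidablePred P] :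
    #{j ∈ range (2 ^ N) | P (binaryDigits N j)} = #{e | P e} := by
  have himage : (range (2 ^ N)).image (binaryDigits N) = Finset.univ := by
    refine eq_univ_of_card _ ?_
    simp [card_image_of_injOn (binaryDigits_injOn N)]
  rw [← himage, filter_image, card_image_of_injOn ((binaryDigits_injOn N).mono (filter_subset _ _))]

lemma walsh_eq_neg_one_pow_bitMatrix_mulVec {M N : ℕ} (n : Fin M → ℕ) (hN : ∀ k, n k < 2 ^ N)
    {x : ℝ} (hx : 0 ≤ x) (hxN : ∀ j : ℕ, 2 ^ N * x ≠ j) (k : Fin M) :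
    walsh (n k) x = (-1) ^ ((bitMatrix n N).mulVec (binaryDigits N ⌊2 ^ N * x⌋₊) k).val := by
  rw [walsh_eq_neg_one_pow_sum (hN k) hx hxN, neg_one_pow_eq_pow_mod_two, ← ZMod.val_natCast]
  congr 2
  simp [Matrix.mulVec, dotProduct, bitMatrix, binaryDigits, Finset.sum_range]

theorem volume_setOf_walsh_mem {M : ℕ} (n : Fin M → ℕ) (hpos : ∀ k, n k ≠ 0)
    (hlog : StrictMono fun k => Nat.log 2 (n k)) (s : Set (Fin M → ℝ)) [DecidablePred (· ∈ s)] :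
    volume {x ∈ Icc (0 : ℝ) 1 | (fun k => walsh (n k) x) ∈ s} =
      #{c : Fin M → ZMod 2 | (fun k => (-1 : ℝ) ^ (c k).val) ∈ s} / 2 ^ M := by
  obtain ⟨N, hN⟩ : ∃ N, ∀ k, n k < 2 ^ N := ⟨∑ k, n k, fun k => Nat.lt_two_pow_self.trans_le
    (Nat.pow_le_pow_right two_pos (Finset.single_le_sum (by simp) (Finset.mem_univ k)))⟩
  set B := bitMatrix n N
  set P : (Fin N → ZMod 2) → Prop := fun e => (fun k => (-1 : ℝ) ^ (B.mulVec e k).val) ∈ s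
  have hae : {x ∈ Icc (0 : ℝ) 1 | (fun k => walsh (n k) x) ∈ s} =ᵐ[volume]
      {x ∈ Icc (0 : ℝ) 1 | P (binaryDigits N ⌊((2 ^ N : ℕ) : ℝ) * x⌋₊)} := by
    refine Filter.eventuallyEq_set.2 ?_
    filter_upwards [(Set.countable_range fun j : ℕ => (j : ℝ) / 2 ^ N).ae_notMem volume]
      with x hx
    refine and_congr_right fun hxI => ?_
    have hxN : ∀ j : ℕ, 2 ^ N * x ≠ j := by
      rintro j hj
      exact hx ⟨j, show (j : ℝ) / 2 ^ N = x by rw [← hj]; field_simp⟩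
    simp only [funext (walsh_eq_neg_one_pow_bitMatrix_mulVec n hN hxI.1 hxN), Nat.cast_pow,
      Nat.cast_ofNat, B, P]
  have hcount := B.mulVecLin.toAddMonoidHom.card_filter_comp_mul_card
    (bitMatrix_mulVec_surjective n hpos hlog hN) fun c => (fun k => (-1 : ℝ) ^ (c k).val) ∈ s
  simp only [Fintype.card_fun, ZMod.card, Fintype.card_fin] at hcount
  have hnat : 2 ^ M * #{e | P e} =
      2 ^ N * #{c : Fin M → ZMod 2 | (fun k => (-1 : ℝ) ^ (c k).val) ∈ s} := by
    rw [mul_comm, mul_comm (2 ^ N)]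
    exact hcount
  rw [measure_congr hae, volume_setOf_floor_mul (P := fun j => P (binaryDigits N j))
    (by positivity), card_filter_binaryDigits N P,
    ENNReal.div_eq_div_iff (by positivity) (by simp) (by positivity) (by simp)]
  simpa only [Nat.cast_mul, Nat.cast_pow, Nat.cast_ofNat] using
    congrArg (Nat.cast : ℕ → ENNReal) hnat

lemma WalshLacunary.strictMono_log_two {q : ℝ} (hq : 2 ≤ q) {n : ℕ → ℕ}
    (hn : WalshLacunary q n) : StrictMono fun k => Nat.log 2 (n k) := by
  refine strictMono_nat_of_lt_succ fun k => ?_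
  have hdouble : n k * 2 ≤ n (k + 1) := by
    have hlac := hn.2 k
    exact_mod_cast (show ((n k * 2 : ℕ) : ℝ) ≤ n (k + 1) by
      push_cast; nlinarith [(n k).cast_nonneg (α := ℝ)])
  calc Nat.log 2 (n k) < Nat.log 2 (n k * 2) := by
        rw [Nat.log_mul_base one_lt_two (Nat.one_le_iff_ne_zero.1 (hn.1 k))]; omega
    _ ≤ Nat.log 2 (n (k + 1)) := Nat.log_mono_right hdouble

theorem walsh_rademacher_equidistributed_general (q : ℝ) (hq : 2 ≤ q) (n : ℕ → ℕ)
    (hn : WalshLacunary q n) (M : ℕ)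
    (a : ℕ → ℝ) (lam : ℝ) :
    volume {x ∈ Set.Icc (0:ℝ) 1 |
        lam < |∑ k ∈ Finset.range M, a k * walsh (n k) x|} =
      volume {x ∈ Set.Icc (0:ℝ) 1 |
        lam < |∑ k ∈ Finset.range M, a k * rademacher (k + 1) x|} := by
  classical
  set s : Set (Fin M → ℝ) := {v | lam < |∑ k : Fin M, a k * v k|}
  have hW := volume_setOf_walsh_mem (fun k : Fin M => n k)
    (fun k => Nat.one_le_iff_ne_zero.1 (hn.1 k))
    ((hn.strictMono_log_two hq).comp Fin.val_strictMono) s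
  have hR := volume_setOf_walsh_mem (fun k : Fin M => 2 ^ (k : ℕ))
    (fun k => pow_ne_zero _ two_ne_zero) (by simpa [Nat.log_pow] using Fin.val_strictMono) s
  simp only [s, Set.mem_ofPred_eq, walsh_two_pow] at hW hR
  simp only [Finset.sum_range]
  rw [hW, hR]

/-- **Equidistribution of lacunary Walsh partial sums with Rademacher partial
sums** for lacunarity constant `q ≥ 2`. -/
theorem walsh_rademacher_equidistributed (q : ℝ) (hq : 2 ≤ q) (n : ℕ → ℕ)
    (hn : WalshLacunary q n) (M : ℕ) (hM : 1 ≤ M)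
    (a : ℕ → ℝ) (ha : Summable (fun k => a k ^ 2)) (lam : ℝ) (hlam : 0 < lam) :
    volume {x ∈ Set.Icc (0:ℝ) 1 |
        lam < |∑ k ∈ Finset.range M, a k * walsh (n k) x|} =
      volume {x ∈ Set.Icc (0:ℝ) 1 |
        lam < |∑ k ∈ Finset.range M, a k * rademacher (k + 1) x|} :=
  walsh_rademacher_equidistributed_general q hq n hn M a lam
end

section
/- (Uniform basis inequality for lacunary Walsh sequences in L^p) Let 1 ≤ p < ∞ and q > 1. There exists a constant K = K(p,q) > 0 such that for every q-lacunary sequence (w_{n_k}) of Walsh functions, all integers 1 ≤ M < N, and all real numbers a_1, …, a_N, ‖Σ_{k=1}^M a_k w_{n_k}‖_{L^p([0,1])} ≤ K · ‖Σ_{k=1}^N a_k w_{n_k}‖_{L^p([0,1])}. -/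
/-!
Replace each Rademacher factor `sign (sin (2^i π t))` by `(-1)^⌊2^i t⌋`, which agrees with it
off the dyadic rationals. A Walsh polynomial with frequencies below `2^L` is then constant on the
dyadic intervals of length `2^(-L)`, and its `L^p` norm is a finite average over them.

Let `S_m = ∑_{k<m} a_k w_{n_k}`, let `2^J` be the first power of two above `n_{M-1}` and `M'`
the first index with `n_{M'} ≥ 2^J`. Averaging over the dyadic intervals of length `2^(-J)` keeps
the terms of `S_N` with `n_k < 2^J` and kills the others, so `S_{M'}` is a conditional expectation
of `S_N` and `‖S_{M'}‖_p ≤ ‖S_N‖_p`. Orthonormality gives `|a_k| ≤ ‖S_N‖_1 ≤ ‖S_N‖_p`, and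
lacunarity gives `M' - M < B` as soon as `q^B ≥ 2`. Hence
`‖S_M‖_p ≤ ‖S_{M'}‖_p + ∑_{M ≤ k < M'} |a_k| ≤ (B + 1) ‖S_N‖_p`.
-/

open MeasureTheory Real Set Filter

open Finset

lemma floor_two_pow_mul_eq_floor_div {e J : ℕ} (he : e ≤ J) (t : ℝ) :
    ⌊(2:ℝ) ^ e * t⌋ = ⌊(2:ℝ) ^ J * t⌋ / (2 ^ (J - e) : ℕ) := by
  rw [← Int.floor_div_natCast, ← Nat.add_sub_cancel' he]
  congr 1
  push_cast
  rw [pow_add, Nat.add_sub_cancel_left]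
  field_simp

lemma floor_two_pow_mul_natCast_div {J L : ℕ} (hJL : J ≤ L) (r : ℕ) :
    ⌊(2:ℝ) ^ J * (r / 2 ^ L)⌋ = (r / 2 ^ (L - J) : ℕ) := by
  rw [floor_two_pow_mul_eq_floor_div hJL, mul_div_cancel₀ _ (by positivity), Int.floor_natCast]
  push_cast
  rfl

/-- `f` is constant on every dyadic interval `[r / 2 ^ J, (r + 1) / 2 ^ J)`. -/
def IsDyadicStep (J : ℕ) (f : ℝ → ℝ) : Prop :=
  ∀ s t : ℝ, ⌊(2:ℝ) ^ J * s⌋ = ⌊(2:ℝ) ^ J * t⌋ → f s = f t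

namespace IsDyadicStep

variable {J L : ℕ} {f : ℝ → ℝ}

lemma comp (hf : IsDyadicStep J f) (φ : ℝ → ℝ) : IsDyadicStep J (fun t => φ (f t)) :=
  fun s t hst => congrArg φ (hf s t hst)

lemma sum {ι : Type*} (s : Finset ι) {f : ι → ℝ → ℝ} (hf : ∀ k ∈ s, IsDyadicStep J (f k)) :
    IsDyadicStep J (fun t => ∑ k ∈ s, f k t) :=
  fun u v huv => Finset.sum_congr rfl fun k hk => hf k hk u v huv

lemma eq_natCast_div (hf : IsDyadicStep L f) {r : ℕ} {t : ℝ}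
    (ht : t ∈ Set.Ico (r / 2 ^ L : ℝ) ((r + 1) / 2 ^ L)) : f t = f (r / 2 ^ L) := by
  refine hf t _ ?_
  rw [floor_two_pow_mul_natCast_div le_rfl, Nat.sub_self, pow_zero, Nat.div_one, Int.floor_eq_iff]
  have h2L : (0:ℝ) < 2 ^ L := by positivity
  obtain ⟨h1, h2⟩ := ht
  rw [div_le_iff₀' h2L] at h1
  rw [lt_div_iff₀' h2L] at h2
  exact ⟨h1, h2⟩

lemma integral_Icc_eq_sum (hf : IsDyadicStep L f) :
    ∫ t in Set.Icc (0:ℝ) 1, f t = (2 ^ L : ℝ)⁻¹ * ∑ r ∈ range (2 ^ L), f (r / 2 ^ L) := by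
  set a : ℕ → ℝ := fun r => r / 2 ^ L
  have ha : ∀ r, a r ≤ a (r + 1) := fun r => by simp only [a]; gcongr; simp
  have hconst : ∀ r, Set.EqOn f (fun _ => f (a r)) (Set.Ico (a r) (a (r + 1))) :=
    fun r t ht => hf.eq_natCast_div (by simpa [a] using ht)
  have hint : ∀ r, IntervalIntegrable f volume (a r) (a (r + 1)) := fun r =>
    (intervalIntegrable_iff_integrableOn_Ico_of_le (ha r)).2 <|
      (integrableOn_const measure_Ico_lt_top.ne).congr_fun (hconst r).symm measurableSet_Ico
  have hpiece : ∀ r, ∫ t in a r..a (r + 1), f t = (2 ^ L : ℝ)⁻¹ * f (a r) := fun r => by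
    rw [intervalIntegral.integral_of_le (ha r), ← integral_Ico_eq_integral_Ioc,
      setIntegral_congr_fun measurableSet_Ico (hconst r), setIntegral_const,
      Real.volume_real_Ico_of_le (ha r), smul_eq_mul]
    simp only [a]
    push_cast
    ring
  have h0 : a 0 = 0 := by simp [a]
  have h1 : a (2 ^ L) = 1 := by simp [a]
  rw [integral_Icc_eq_integral_Ioc, ← intervalIntegral.integral_of_le zero_le_one, ← h0, ← h1,
    ← intervalIntegral.sum_integral_adjacent_intervals fun r _ => hint r, mul_sum]
  exact Finset.sum_congr rfl fun r _ => hpiece r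

end IsDyadicStep

lemma prod_range_ite_testBit_eq {M : Type*} [CommMonoid M] (F : ℕ → M) {m L L' : ℕ}
    (hm : m < 2 ^ L) (hLL' : L ≤ L') :
    ∏ i ∈ range L, (if m.testBit i then F i else 1) =
      ∏ i ∈ range L', (if m.testBit i then F i else 1) := by
  refine prod_subset (range_subset_range.2 hLL') fun i _ hi => ?_
  rw [Nat.testBit_lt_two_pow (hm.trans_le (Nat.pow_le_pow_right two_pos (by simpa using hi)))]
  rfl

lemma Nat.xor_two_pow_div_two_pow_of_lt (r : ℕ) {j e : ℕ} (hje : j < e) :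
    (r ^^^ 2 ^ j) / 2 ^ e = r / 2 ^ e := by
  rw [← Nat.shiftRight_eq_div_pow, Nat.shiftRight_xor_distrib, Nat.shiftRight_eq_div_pow,
    Nat.shiftRight_eq_div_pow, Nat.div_eq_of_lt (Nat.pow_lt_pow_right one_lt_two hje), Nat.xor_zero]

lemma Nat.xor_two_pow_div_two_pow (r j : ℕ) : (r ^^^ 2 ^ j) / 2 ^ j = r / 2 ^ j ^^^ 1 := by
  rw [← Nat.shiftRight_eq_div_pow, Nat.shiftRight_xor_distrib, Nat.shiftRight_eq_div_pow,
    Nat.shiftRight_eq_div_pow, Nat.div_self (by positivity)]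

lemma neg_one_pow_xor_one (x : ℕ) : (-1 : ℝ) ^ (x ^^^ 1) = -(-1) ^ x := by
  rw [neg_one_pow_eq_pow_mod_two, Nat.xor_mod_two_eq, ← neg_one_pow_eq_pow_mod_two, pow_succ,
    mul_neg_one]

/-- Paley's Walsh function with each `sign (sin (2 ^ (i + 1) π t))` replaced by
`(-1) ^ ⌊2 ^ (i + 1) t⌋`; the two agree off the dyadic rationals. -/
noncomputable def dyadicWalsh (m : ℕ) (t : ℝ) : ℝ :=
  ∏ i ∈ range m, if m.testBit i then (-1 : ℝ) ^ ⌊(2:ℝ) ^ (i + 1) * t⌋ else 1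

lemma dyadicWalsh_eq_prod_range {m L : ℕ} (hm : m < 2 ^ L) (t : ℝ) :
    dyadicWalsh m t =
      ∏ i ∈ range L, if m.testBit i then (-1 : ℝ) ^ ⌊(2:ℝ) ^ (i + 1) * t⌋ else 1 := by
  rw [dyadicWalsh, prod_range_ite_testBit_eq _ m.lt_two_pow_self (Nat.le_add_left m L),
    ← prod_range_ite_testBit_eq _ hm (Nat.le_add_right L m)]

lemma dyadicWalsh_zero (t : ℝ) : dyadicWalsh 0 t = 1 := by simp [dyadicWalsh]

lemma abs_dyadicWalsh (m : ℕ) (t : ℝ) : |dyadicWalsh m t| = 1 := by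
  rw [dyadicWalsh, abs_prod]
  refine prod_eq_one fun i _ => ?_
  split_ifs <;> simp

lemma dyadicWalsh_mul_dyadicWalsh (a b : ℕ) (t : ℝ) :
    dyadicWalsh a t * dyadicWalsh b t = dyadicWalsh (a ^^^ b) t := by
  have ha : a < 2 ^ (a + b) :=
    a.lt_two_pow_self.trans_le (Nat.pow_le_pow_right two_pos (Nat.le_add_right a b))
  have hb : b < 2 ^ (a + b) :=
    b.lt_two_pow_self.trans_le (Nat.pow_le_pow_right two_pos (Nat.le_add_left b a))
  rw [dyadicWalsh_eq_prod_range ha, dyadicWalsh_eq_prod_range hb,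
    dyadicWalsh_eq_prod_range (Nat.xor_lt_two_pow ha hb), ← prod_mul_distrib]
  refine prod_congr rfl fun i _ => ?_
  rw [Nat.testBit_xor]
  cases a.testBit i <;> cases b.testBit i <;> simp [← mul_zpow]

lemma isDyadicStep_dyadicWalsh {m J : ℕ} (hm : m < 2 ^ J) : IsDyadicStep J (dyadicWalsh m) := by
  intro s t hst
  rw [dyadicWalsh_eq_prod_range hm, dyadicWalsh_eq_prod_range hm]
  refine prod_congr rfl fun i _ => ?_
  split_ifs with hi
  · have hiJ : i + 1 ≤ J := (Nat.pow_lt_pow_iff_right one_lt_two).1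
      ((Nat.ge_two_pow_of_testBit hi).trans_lt hm)
    rw [floor_two_pow_mul_eq_floor_div hiJ, floor_two_pow_mul_eq_floor_div hiJ t, hst]
  · rfl

lemma dyadicWalsh_natCast_div {m L : ℕ} (hm : m < 2 ^ L) (r : ℕ) :
    dyadicWalsh m (r / 2 ^ L) =
      ∏ i ∈ range L, if m.testBit i then (-1 : ℝ) ^ (r / 2 ^ (L - (i + 1))) else 1 := by
  rw [dyadicWalsh_eq_prod_range hm]
  refine prod_congr rfl fun i hi => ?_
  split_ifs
  · rw [floor_two_pow_mul_natCast_div (Finset.mem_range.1 hi), zpow_natCast]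
  · rfl

/-- Flipping the bit of `r` read by the top factor of `w_m` changes the sign of `w_m(r / 2^L)`. -/
lemma dyadicWalsh_xor_div {m L : ℕ} (hm0 : m ≠ 0) (hm : m < 2 ^ L) (r : ℕ) :
    dyadicWalsh m ((r ^^^ 2 ^ (L - (m.log2 + 1)) : ℕ) / 2 ^ L) = -dyadicWalsh m (r / 2 ^ L) := by
  have hlog : m.log2 < L := (Nat.log2_lt hm0).2 hm
  rw [dyadicWalsh_natCast_div hm, dyadicWalsh_natCast_div hm,
    ← mul_prod_erase _ _ (mem_range.2 hlog), ← mul_prod_erase _ _ (mem_range.2 hlog),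
    Nat.testBit_log2 hm0, if_pos rfl, if_pos rfl, Nat.xor_two_pow_div_two_pow,
    neg_one_pow_xor_one, neg_mul]
  congr 2
  refine prod_congr rfl fun i hi => ?_
  obtain ⟨hne, hiL⟩ := mem_erase.1 hi
  split_ifs with hbit
  · have hi_le : i ≤ m.log2 := (Nat.le_log2 hm0).2 (Nat.ge_two_pow_of_testBit hbit)
    rw [Nat.xor_two_pow_div_two_pow_of_lt r (by have := Finset.mem_range.1 hiL; omega)]
  · rfl

lemma sum_dyadicWalsh_fiber_eq_zero {m J L : ℕ} (hJm : 2 ^ J ≤ m) (hm : m < 2 ^ L) (b : ℕ) :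
    ∑ r ∈ range (2 ^ L) with r / 2 ^ (L - J) = b, dyadicWalsh m (r / 2 ^ L) = 0 := by
  have hm0 : m ≠ 0 := (Nat.pos_of_ne_zero (by positivity) |>.trans_le hJm).ne'
  have hJ : J ≤ m.log2 := (Nat.le_log2 hm0).2 hJm
  have hlog : m.log2 < L := (Nat.log2_lt hm0).2 hm
  refine sum_involution (fun r _ => r ^^^ 2 ^ (L - (m.log2 + 1))) (fun r _ => ?_)
    (fun r _ _ => ?_) (fun r hr => ?_) (fun r _ => ?_)
  · rw [dyadicWalsh_xor_div hm0 hm, add_neg_cancel]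
  · exact fun h => pow_ne_zero (L - (m.log2 + 1)) two_ne_zero (by simpa using congrArg (r ^^^ ·) h)
  · obtain ⟨hrL, rfl⟩ := mem_filter.1 hr
    refine mem_filter.2
      ⟨Finset.mem_range.2 (Nat.xor_lt_two_pow (Finset.mem_range.1 hrL) ?_), ?_⟩
    · exact Nat.pow_lt_pow_right one_lt_two (by omega)
    · exact Nat.xor_two_pow_div_two_pow_of_lt r (by omega)
  · simp

lemma sum_dyadicWalsh_mul_dyadicWalsh {a b L : ℕ} (ha : a < 2 ^ L) (hb : b < 2 ^ L) :
    ∑ r ∈ range (2 ^ L), dyadicWalsh a (r / 2 ^ L) * dyadicWalsh b (r / 2 ^ L) =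
      if a = b then 2 ^ L else 0 := by
  simp_rw [dyadicWalsh_mul_dyadicWalsh]
  split_ifs with hab
  · simp [hab, dyadicWalsh_zero]
  · have hfiber := sum_dyadicWalsh_fiber_eq_zero (J := 0)
      (Nat.one_le_iff_ne_zero.2 (by simpa [Nat.xor_eq_zero_iff] using hab))
      (Nat.xor_lt_two_pow ha hb) 0
    rwa [filter_true_of_mem fun r hr => by simpa [Nat.div_eq_zero_iff] using hr] at hfiber

lemma sign_sin_pi_mul {x : ℝ} (hx : Real.sin (π * x) ≠ 0) :
    Real.sign (Real.sin (π * x)) = (-1) ^ ⌊x⌋ := by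
  have hsplit : π * x = π * Int.fract x + ⌊x⌋ * π := by
    linear_combination π * (Int.floor_add_fract x).symm
  rw [hsplit, Real.sin_add_int_mul_pi] at hx ⊢
  have hfract : 0 < Int.fract x := (Int.fract_nonneg x).lt_of_ne' (by rintro h; simp [h] at hx)
  have hsin : 0 < Real.sin (π * Int.fract x) :=
    Real.sin_pos_of_pos_of_lt_pi (by positivity) (by nlinarith [Real.pi_pos, Int.fract_lt_one x])
  rcases Int.even_or_odd ⌊x⌋ with he | ho
  · rw [he.neg_one_zpow, one_mul, Real.sign_of_pos hsin]
  · rw [ho.neg_one_zpow, neg_one_mul, Real.sign_of_neg (neg_neg_of_pos hsin)]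

lemma ae_sin_two_pow_mul_ne_zero (i : ℕ) : ∀ᵐ t : ℝ, Real.sin (2 ^ i * π * t) ≠ 0 := by
  refine measure_mono_null (fun t ht => ?_)
    ((Set.countable_range fun k : ℤ => (k : ℝ) / 2 ^ i).measure_zero volume)
  obtain ⟨k, hk⟩ := Real.sin_eq_zero_iff.1 (not_not.1 ht)
  refine ⟨k, (div_eq_iff (by positivity)).2 (mul_right_cancel₀ Real.pi_ne_zero ?_)⟩
  rw [hk]
  ring

lemma walsh_ae_eq_dyadicWalsh : ∀ᵐ t : ℝ, ∀ m, walsh m t = dyadicWalsh m t := by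
  filter_upwards [ae_all_iff.2 ae_sin_two_pow_mul_ne_zero] with t ht m
  refine prod_congr rfl fun i _ => ?_
  split_ifs
  · rw [rademacher, show (2:ℝ) ^ (i + 1) * π * t = π * (2 ^ (i + 1) * t) by ring,
      sign_sin_pi_mul (by rw [← mul_assoc, mul_comm π]; exact ht (i + 1))]
  · rfl

lemma lpNorm_congr_ae {p : ℝ} {f g : ℝ → ℝ} (hfg : f =ᵐ[volume] g) :
    lpNorm p f = lpNorm p g := by
  rw [_root_.lpNorm, _root_.lpNorm,
    integral_congr_ae (ae_restrict_of_ae (hfg.mono fun t ht => by rw [ht]))]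

lemma rpow_mean_abs_le_mean_abs_rpow {ι : Type*} {p : ℝ} (hp : 1 ≤ p) {s : Finset ι}
    (hs : s.Nonempty) (f : ι → ℝ) :
    ((#s : ℝ)⁻¹ * ∑ i ∈ s, |f i|) ^ p ≤ (#s : ℝ)⁻¹ * ∑ i ∈ s, |f i| ^ p := by
  have hcard : (#s : ℝ) ≠ 0 := by exact_mod_cast hs.card_pos.ne'
  have h := Real.rpow_arith_mean_le_arith_mean_rpow s (fun _ => (#s : ℝ)⁻¹) (fun i => |f i|)
    (fun _ _ => by positivity) (by simp [hcard]) (fun _ _ => abs_nonneg _) hp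
  simpa only [← mul_sum] using h

/-- Conditional expectation onto the fibres of `g` does not increase the `ℓ^p` norm. -/
lemma sum_abs_rpow_le_of_fiberwise {ι κ : Type*} [DecidableEq κ] {p : ℝ} (hp : 1 ≤ p)
    (s : Finset ι) (g : ι → κ) {u v : ι → ℝ} (hu : ∀ i ∈ s, ∀ j ∈ s, g i = g j → u i = u j)
    (huv : ∀ b, ∑ i ∈ s with g i = b, u i = ∑ i ∈ s with g i = b, v i) :
    ∑ i ∈ s, |u i| ^ p ≤ ∑ i ∈ s, |v i| ^ p := by
  have hmaps : ∀ i ∈ s, g i ∈ s.image g := fun i hi => mem_image_of_mem g hi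
  rw [← sum_fiberwise_of_maps_to hmaps, ← sum_fiberwise_of_maps_to hmaps]
  refine sum_le_sum fun b hb => ?_
  obtain ⟨i₀, hi₀, rfl⟩ := mem_image.1 hb
  set t := {i ∈ s | g i = g i₀}
  have ht : t.Nonempty := ⟨i₀, mem_filter.2 ⟨hi₀, rfl⟩⟩
  have hconst : ∀ i ∈ t, u i = u i₀ := fun i hi =>
    hu i (mem_filter.1 hi).1 i₀ hi₀ (mem_filter.1 hi).2
  have hcard : (0:ℝ) < #t := by exact_mod_cast ht.card_pos
  have hmean : u i₀ = (#t : ℝ)⁻¹ * ∑ i ∈ t, v i := by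
    rw [← huv, sum_congr rfl hconst, sum_const, nsmul_eq_mul, inv_mul_cancel_left₀ hcard.ne']
  calc ∑ i ∈ t, |u i| ^ p = #t * |u i₀| ^ p := by
        rw [sum_congr rfl fun i hi => by rw [hconst i hi], sum_const, nsmul_eq_mul]
    _ ≤ #t * ((#t : ℝ)⁻¹ * ∑ i ∈ t, |v i|) ^ p := by
        gcongr
        rw [hmean, abs_mul, abs_inv, Nat.abs_cast]
        gcongr
        exact abs_sum_le_sum_abs _ _
    _ ≤ #t * ((#t : ℝ)⁻¹ * ∑ i ∈ t, |v i| ^ p) := by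
        gcongr
        exact rpow_mean_abs_le_mean_abs_rpow hp ht v
    _ = ∑ i ∈ t, |v i| ^ p := mul_inv_cancel_left₀ hcard.ne' _

/-- The `L^p([0,1])` norm of the step function with value `f (r / 2 ^ L)` on
`[r / 2 ^ L, (r + 1) / 2 ^ L)`. -/
noncomputable def gridNorm (p : ℝ) (L : ℕ) (f : ℝ → ℝ) : ℝ :=
  ((2 ^ L : ℝ)⁻¹ * ∑ r ∈ range (2 ^ L), |f (r / 2 ^ L)| ^ p) ^ (1 / p)

lemma IsDyadicStep.lpNorm_eq_gridNorm {L : ℕ} {f : ℝ → ℝ} (hf : IsDyadicStep L f) (p : ℝ) :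
    lpNorm p f = gridNorm p L f := by
  rw [_root_.lpNorm, gridNorm, (hf.comp fun x => |x| ^ p).integral_Icc_eq_sum]

section gridNorm

variable {p : ℝ} {L : ℕ}

lemma gridNorm_nonneg (f : ℝ → ℝ) : 0 ≤ gridNorm p L f := by
  unfold gridNorm
  positivity

lemma gridNorm_mono (hp : 0 < p) {f g : ℝ → ℝ}
    (h : ∑ r ∈ range (2 ^ L), |f (r / 2 ^ L)| ^ p ≤ ∑ r ∈ range (2 ^ L), |g (r / 2 ^ L)| ^ p) :
    gridNorm p L f ≤ gridNorm p L g := by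
  unfold gridNorm
  gcongr

lemma gridNorm_le_of_fiberwise (hp : 1 ≤ p) {J : ℕ} (hJL : J ≤ L) {f g : ℝ → ℝ}
    (hf : IsDyadicStep J f)
    (hfg : ∀ b, ∑ r ∈ range (2 ^ L) with r / 2 ^ (L - J) = b, f (r / 2 ^ L) =
      ∑ r ∈ range (2 ^ L) with r / 2 ^ (L - J) = b, g (r / 2 ^ L)) :
    gridNorm p L f ≤ gridNorm p L g :=
  gridNorm_mono (by linarith) <| sum_abs_rpow_le_of_fiberwise hp _ (· / 2 ^ (L - J))
    (fun _ _ _ _ hij => hf _ _ (by rw [floor_two_pow_mul_natCast_div hJL,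
      floor_two_pow_mul_natCast_div hJL, hij])) hfg

lemma gridNorm_add_le (hp : 1 ≤ p) (f g : ℝ → ℝ) :
    gridNorm p L (f + g) ≤ gridNorm p L f + gridNorm p L g := by
  have hscale : ∀ h : ℝ → ℝ, gridNorm p L h =
      ((2 ^ L : ℝ)⁻¹) ^ (1 / p) * (∑ r ∈ range (2 ^ L), |h (r / 2 ^ L)| ^ p) ^ (1 / p) :=
    fun h => Real.mul_rpow (by positivity) (sum_nonneg fun _ _ => by positivity)
  rw [hscale, hscale, hscale, ← mul_add]
  gcongr
  exact Real.Lp_add_le _ _ _ hp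

lemma gridNorm_neg (f : ℝ → ℝ) : gridNorm p L (-f) = gridNorm p L f := by
  simp [gridNorm]

lemma gridNorm_sub_le (hp : 1 ≤ p) (f g : ℝ → ℝ) :
    gridNorm p L (f - g) ≤ gridNorm p L f + gridNorm p L g := by
  simpa [sub_eq_add_neg, gridNorm_neg] using gridNorm_add_le hp f (-g)

lemma gridNorm_zero (hp : p ≠ 0) : gridNorm p L 0 = 0 := by
  simp [gridNorm, Real.zero_rpow hp, Real.zero_rpow (inv_ne_zero hp)]

lemma gridNorm_sum_le (hp : 1 ≤ p) {ι : Type*} (s : Finset ι) (f : ι → ℝ → ℝ) :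
    gridNorm p L (∑ k ∈ s, f k) ≤ ∑ k ∈ s, gridNorm p L (f k) := by
  classical
  induction s using Finset.induction with
  | empty => simp [gridNorm_zero (by linarith : p ≠ 0)]
  | insert k s hk ih =>
    rw [sum_insert hk, sum_insert hk]
    exact (gridNorm_add_le hp _ _).trans (by gcongr)

lemma gridNorm_const_mul (hp : 0 < p) (c : ℝ) (f : ℝ → ℝ) :
    gridNorm p L (fun t => c * f t) = |c| * gridNorm p L f := by
  simp only [gridNorm, abs_mul, Real.mul_rpow (abs_nonneg c) (abs_nonneg _), ← mul_sum,
    mul_left_comm _ (|c| ^ p)]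
  rw [Real.mul_rpow (by positivity) (by positivity), ← Real.rpow_mul (abs_nonneg c),
    mul_one_div_cancel hp.ne', Real.rpow_one]

lemma gridNorm_dyadicWalsh (m : ℕ) : gridNorm p L (dyadicWalsh m) = 1 := by
  simp [gridNorm, abs_dyadicWalsh]

lemma mean_abs_le_gridNorm (hp : 1 ≤ p) (f : ℝ → ℝ) :
    (2 ^ L : ℝ)⁻¹ * ∑ r ∈ range (2 ^ L), |f (r / 2 ^ L)| ≤ gridNorm p L f := by
  have hjensen := rpow_mean_abs_le_mean_abs_rpow hp
    (nonempty_range_iff.2 (pow_ne_zero L two_ne_zero)) fun r : ℕ => f (r / 2 ^ L)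
  rw [card_range, Nat.cast_pow, Nat.cast_ofNat] at hjensen
  rw [gridNorm, ← Real.rpow_le_rpow_iff (by positivity) (by positivity) (by linarith : 0 < p),
    ← Real.rpow_mul (by positivity), one_div_mul_cancel (by linarith), Real.rpow_one]
  exact hjensen

end gridNorm

noncomputable def walshPoly (n : ℕ → ℕ) (a : ℕ → ℝ) (s : Finset ℕ) (t : ℝ) : ℝ :=
  ∑ k ∈ s, a k * dyadicWalsh (n k) t

section walshPoly

variable {p : ℝ} {n : ℕ → ℕ} {a : ℕ → ℝ} {J L : ℕ} {s : Finset ℕ}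

lemma isDyadicStep_walshPoly (hs : ∀ k ∈ s, n k < 2 ^ J) : IsDyadicStep J (walshPoly n a s) :=
  IsDyadicStep.sum s fun k hk => (isDyadicStep_dyadicWalsh (hs k hk)).comp (a k * ·)

lemma lpNorm_walsh_sum_eq_gridNorm (p : ℝ) (hs : ∀ k ∈ s, n k < 2 ^ L) :
    lpNorm p (fun t => ∑ k ∈ s, a k * walsh (n k) t) = gridNorm p L (walshPoly n a s) := by
  rw [lpNorm_congr_ae (g := walshPoly n a s), (isDyadicStep_walshPoly hs).lpNorm_eq_gridNorm]
  filter_upwards [walsh_ae_eq_dyadicWalsh] with t ht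
  simp only [walshPoly, ht]

lemma sum_walshPoly_fiber_eq_zero (hs : ∀ k ∈ s, 2 ^ J ≤ n k ∧ n k < 2 ^ L) (b : ℕ) :
    ∑ r ∈ range (2 ^ L) with r / 2 ^ (L - J) = b, walshPoly n a s (r / 2 ^ L) = 0 := by
  simp only [walshPoly]
  rw [sum_comm]
  refine sum_eq_zero fun k hk => ?_
  rw [← mul_sum, sum_dyadicWalsh_fiber_eq_zero (hs k hk).1 (hs k hk).2, mul_zero]

lemma gridNorm_walshPoly_le_of_subset (hp : 1 ≤ p) (hJL : J ≤ L) {t : Finset ℕ} (hst : s ⊆ t)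
    (hs : ∀ k ∈ s, n k < 2 ^ J) (ht : ∀ k ∈ t \ s, 2 ^ J ≤ n k ∧ n k < 2 ^ L) :
    gridNorm p L (walshPoly n a s) ≤ gridNorm p L (walshPoly n a t) := by
  refine gridNorm_le_of_fiberwise hp hJL (isDyadicStep_walshPoly hs) fun b => ?_
  have hsplit : ∀ x, walshPoly n a t x = walshPoly n a (t \ s) x + walshPoly n a s x :=
    fun x => (sum_sdiff hst).symm
  simp only [hsplit, sum_add_distrib, sum_walshPoly_fiber_eq_zero ht, zero_add]

lemma abs_le_gridNorm_walshPoly (hp : 1 ≤ p) (hn : Set.InjOn n s) (hs : ∀ k ∈ s, n k < 2 ^ L)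
    {j : ℕ} (hj : j ∈ s) : |a j| ≤ gridNorm p L (walshPoly n a s) := by
  have horth :
      ∑ r ∈ range (2 ^ L), walshPoly n a s (r / 2 ^ L) * dyadicWalsh (n j) (r / 2 ^ L) =
        2 ^ L * a j := by
    simp only [walshPoly, sum_mul, mul_assoc]
    rw [sum_comm]
    simp only [← mul_sum]
    rw [sum_eq_single j (fun k hk hkj => by
        rw [sum_dyadicWalsh_mul_dyadicWalsh (hs k hk) (hs j hj), if_neg (hn.ne hk hj hkj),
          mul_zero]) (absurd hj),
      sum_dyadicWalsh_mul_dyadicWalsh (hs j hj) (hs j hj), if_pos rfl, mul_comm]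
  calc |a j| = (2 ^ L : ℝ)⁻¹ *
        |∑ r ∈ range (2 ^ L), walshPoly n a s (r / 2 ^ L) * dyadicWalsh (n j) (r / 2 ^ L)| := by
        rw [horth, abs_mul, abs_of_pos (by positivity : (0:ℝ) < 2 ^ L),
          inv_mul_cancel_left₀ (by positivity)]
    _ ≤ (2 ^ L : ℝ)⁻¹ * ∑ r ∈ range (2 ^ L), |walshPoly n a s (r / 2 ^ L)| := by
        gcongr
        refine (abs_sum_le_sum_abs _ _).trans_eq (sum_congr rfl fun r _ => ?_)
        rw [abs_mul, abs_dyadicWalsh, mul_one]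
    _ ≤ gridNorm p L (walshPoly n a s) := mean_abs_le_gridNorm hp _

lemma gridNorm_walshPoly_le_sum_abs (hp : 1 ≤ p) :
    gridNorm p L (walshPoly n a s) ≤ ∑ k ∈ s, |a k| := by
  have hsum : walshPoly n a s = ∑ k ∈ s, fun t => a k * dyadicWalsh (n k) t := by
    ext t
    simp [walshPoly]
  rw [hsum]
  refine (gridNorm_sum_le hp _ _).trans_eq (sum_congr rfl fun k _ => ?_)
  rw [gridNorm_const_mul (by linarith), gridNorm_dyadicWalsh, mul_one]

lemma gridNorm_walshPoly_range_le (hp : 1 ≤ p) (hn : n.Injective) (hJL : J ≤ L) {M M' N : ℕ}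
    (hMM' : M ≤ M') (hM'N : M' ≤ N) (hlow : ∀ k < M', n k < 2 ^ J)
    (hhigh : ∀ k, M' ≤ k → k < N → 2 ^ J ≤ n k) (hL : ∀ k < N, n k < 2 ^ L) :
    gridNorm p L (walshPoly n a (range M)) ≤
      ((M' - M : ℕ) + 1) * gridNorm p L (walshPoly n a (range N)) := by
  set G := gridNorm p L (walshPoly n a (range N))
  have hlowpart : gridNorm p L (walshPoly n a (range M')) ≤ G :=
    gridNorm_walshPoly_le_of_subset hp hJL (range_subset_range.2 hM'N)
      (fun k hk => hlow k (Finset.mem_range.1 hk))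
      (fun k hk => by
        simp only [Finset.mem_sdiff, Finset.mem_range, not_lt] at hk
        exact ⟨hhigh k hk.2 hk.1, hL k hk.1⟩)
  have hcoef : ∀ k ∈ Finset.Ico M M', |a k| ≤ G := fun k hk =>
    abs_le_gridNorm_walshPoly hp hn.injOn (fun k hk => hL k (Finset.mem_range.1 hk))
      (Finset.mem_range.2 (by simp only [Finset.mem_Ico] at hk; omega))
  have hsplit : walshPoly n a (range M) = walshPoly n a (range M') - walshPoly n a (Ico M M') := by
    ext t
    simp only [walshPoly, Pi.sub_apply, ← sum_range_add_sum_Ico _ hMM', add_sub_cancel_right]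
  calc gridNorm p L (walshPoly n a (range M))
      ≤ gridNorm p L (walshPoly n a (range M')) + gridNorm p L (walshPoly n a (Ico M M')) :=
        hsplit ▸ gridNorm_sub_le hp _ _
    _ ≤ G + ∑ k ∈ Ico M M', G :=
        add_le_add hlowpart ((gridNorm_walshPoly_le_sum_abs hp).trans (sum_le_sum hcoef))
    _ = ((M' - M : ℕ) + 1) * G := by
        rw [sum_const, Nat.card_Ico, nsmul_eq_mul]
        ring

end walshPoly

namespace WalshLacunary

variable {q : ℝ} {n : ℕ → ℕ}

lemma strictMono (hq : 1 < q) (hn : WalshLacunary q n) : StrictMono n :=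
  strictMono_nat_of_lt_succ fun k => by
    have hpos : (0:ℝ) < n k := by exact_mod_cast hn.1 k
    exact_mod_cast (lt_mul_of_one_lt_left hpos hq).trans_le (hn.2 k)

lemma pow_mul_le (hq : 0 ≤ q) (hn : WalshLacunary q n) (k j : ℕ) : q ^ j * n k ≤ n (k + j) := by
  induction j with
  | zero => simp
  | succ j ih =>
    calc q ^ (j + 1) * n k = q * (q ^ j * n k) := by ring
      _ ≤ q * n (k + j) := by gcongr
      _ ≤ n (k + j + 1) := hn.2 (k + j)

lemma exists_index_split (hq : 1 < q) (hn : WalshLacunary q n) {B : ℕ} (hB : 2 ≤ q ^ B)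
    {M : ℕ} (hM : 1 ≤ M) :
    ∃ M', M ≤ M' ∧ M' < M + B ∧ ∀ k, k < M' ↔ n k < 2 ^ ((n (M - 1)).log2 + 1) := by
  set T := 2 ^ ((n (M - 1)).log2 + 1)
  have hmono := (hn.strictMono hq).monotone
  have hT : T ≤ n (M - 1 + B) := by
    have hT2 : T ≤ 2 * n (M - 1) := by
      rw [show T = 2 ^ (n (M - 1)).log2 * 2 from pow_succ _ _, mul_comm]
      exact Nat.mul_le_mul_left 2 (Nat.log2_self_le (by have := hn.1 (M - 1); omega))
    have hgrowth : (2 * n (M - 1) : ℝ) ≤ n (M - 1 + B) :=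
      (mul_le_mul_of_nonneg_right hB (by positivity)).trans (hn.pow_mul_le (by linarith) _ _)
    exact hT2.trans (by exact_mod_cast hgrowth)
  have hex : ∃ k, T ≤ n k := ⟨_, hT⟩
  refine ⟨Nat.find hex, ?_, (Nat.find_min' hex hT).trans_lt (by omega), fun k =>
    ⟨fun hk => not_le.1 (Nat.find_min hex hk), fun hk => not_le.1 fun hle =>
      hk.not_ge ((Nat.find_spec hex).trans (hmono hle))⟩⟩
  refine (Nat.le_find_iff hex M).2 fun k hk => not_le.2 ?_
  exact (hmono (by omega : k ≤ M - 1)).trans_lt Nat.lt_log2_self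

end WalshLacunary

/-- **Uniform basis inequality for lacunary Walsh sequences in `L^p`**,
`1 ≤ p < ∞`. -/
theorem walsh_basis_inequality (p q : ℝ) (hp : 1 ≤ p) (hq : 1 < q) :
    ∃ K : ℝ, 0 < K ∧
      ∀ n : ℕ → ℕ, WalshLacunary q n →
        ∀ M N : ℕ, 1 ≤ M → M < N →
          ∀ a : ℕ → ℝ,
            lpNorm p (fun t => ∑ k ∈ Finset.range M, a k * walsh (n k) t) ≤
              K * lpNorm p (fun t => ∑ k ∈ Finset.range N, a k * walsh (n k) t) := by
  obtain ⟨B, hB⟩ := pow_unbounded_of_one_lt (2:ℝ) hq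
  refine ⟨B + 1, by positivity, fun n hn M N hM hMN a => ?_⟩
  obtain ⟨M', hMM', hM'B, hfreq⟩ := hn.exists_index_split hq hB.le hM
  have hmono := (hn.strictMono hq).monotone
  set L := (n (N - 1)).log2 + 1
  have hL : ∀ k < N, n k < 2 ^ L := fun k hk => (hmono (by omega)).trans_lt Nat.lt_log2_self
  have hJL : (n (M - 1)).log2 + 1 ≤ L :=
    (Nat.log2_lt (by have := hn.1 (M - 1); omega)).2 (hL (M - 1) (by omega))
  rw [lpNorm_walsh_sum_eq_gridNorm p fun k hk => hL k (by have := Finset.mem_range.1 hk; omega),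
    lpNorm_walsh_sum_eq_gridNorm p fun k hk => hL k (Finset.mem_range.1 hk)]
  calc gridNorm p L (walshPoly n a (range M))
      ≤ ((min M' N - M : ℕ) + 1) * gridNorm p L (walshPoly n a (range N)) :=
        gridNorm_walshPoly_range_le hp (hn.strictMono hq).injective hJL (le_min hMM' hMN.le)
          (min_le_right _ _) (fun k hk => (hfreq k).1 (by omega))
          (fun k hk hkN => not_lt.1 fun h => by have := (hfreq k).2 h; omega) hL
    _ ≤ (B + 1) * gridNorm p L (walshPoly n a (range N)) := by
        refine mul_le_mul_of_nonneg_right ?_ (gridNorm_nonneg _)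
        gcongr
        exact_mod_cast (by omega : min M' N - M ≤ B)
end

section
/- (The normalized distribution map of a set of positive measure is measure preserving) Let E ⊂ [0,1] be a measurable set with m(E) > 0 and define ρ_E : E → [0,1] by ρ_E(x) := m(E ∩ [0,x])/m(E). Then there exist sets A_1 ⊂ E and A_2 ⊂ [0,1] of Lebesgue measure zero such that ρ_E : E ∖ A_1 → [0,1] ∖ A_2 is bijective, and the pushforward under ρ_E of the normalized measure m_E(A) := m(E ∩ A)/m(E) on E equals Lebesgue measure on [0,1]. -/
open MeasureTheory Real Set Filter

/-- The normalized distribution map `ρ_E(x) = m(E ∩ [0,x]) / m(E)` of a set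
`E ⊆ [0,1]` of positive measure. -/
noncomputable def rhoMap (E : Set ℝ) (x : ℝ) : ℝ :=
  (volume (E ∩ Set.Icc 0 x)).toReal / (volume E).toReal

/-! The function `x ↦ m(E ∩ [0,x])` is monotone and 1-Lipschitz, so `ρ_E` is a continuous
monotone map with `ρ_E(0) = 0` and `ρ_E(1) = 1`. For `c ∈ [0,1]` the sublevel set `{ρ_E ≤ c}`
meets `[0,1]` in an interval `[0,z]` with `ρ_E(z) = c`, hence `m_E{ρ_E ≤ c} = c`: the pushforward
has the distribution function of Lebesgue measure on `[0,1]`.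

A monotone map takes a value twice only for countably many values, and these carry no mass.
Off their preimage `ρ_E` is injective, so by the Lusin–Souslin theorem it maps the rest of `E`
onto a Borel set; the complement of that set in `[0,1]` has a null preimage in `E`, hence is
null. -/

theorem MonotoneOn.exists_preimage_Iic_inter_Icc_eq {α β : Type*}
    [ConditionallyCompleteLinearOrder α] [TopologicalSpace α] [OrderTopology α] [DenselyOrdered α]
    [LinearOrder β] [TopologicalSpace β] [OrderClosedTopology β] {f : α → β} {a b : α} {c : β}
    (hf : MonotoneOn f (Icc a b)) (hf' : ContinuousOn f (Icc a b)) (hab : a ≤ b)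
    (hc : c ∈ Icc (f a) (f b)) : ∃ z, f z = c ∧ f ⁻¹' Iic c ∩ Icc a b = Icc a z := by
  obtain ⟨x, hx, hxc⟩ := intermediate_value_Icc hab hf' hc
  set S := Icc a b ∩ f ⁻¹' {c}
  have hSbdd : BddAbove S := bddAbove_Icc.mono inter_subset_left
  have hz : sSup S ∈ S :=
    (hf'.preimage_isClosed_of_isClosed isClosed_Icc isClosed_singleton).csSup_mem ⟨x, hx, hxc⟩
      hSbdd
  refine ⟨sSup S, hz.2, Set.ext fun t => ⟨fun ⟨htc, ht⟩ => ⟨ht.1, ?_⟩, fun ⟨hat, htz⟩ => ?_⟩⟩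
  · by_contra! hzt
    have hft : f t = c := le_antisymm htc (hz.2 ▸ hf hz.1 ht hzt.le)
    exact (le_csSup hSbdd ⟨ht, hft⟩).not_gt hzt
  · have ht : t ∈ Icc a b := ⟨hat, htz.trans hz.1.2⟩
    exact ⟨(hf ht hz.1 htz).trans_eq hz.2, ht⟩

theorem exists_bijOn_diff_of_map_restrict_eq {α β : Type*} [TopologicalSpace α] [PolishSpace α]
    [MeasurableSpace α] [BorelSpace α] [LinearOrder α] [OrderTopology α] [TopologicalSpace β]
    [T2Space β] [MeasurableSpace β] [BorelSpace β] [LinearOrder β] {f : α → β} {μ : Measure α}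
    {ν : Measure β} [NullSingletonClass ν] {s : Set α} {t : Set β} (hs : MeasurableSet s)
    (ht : MeasurableSet t) (hf : MonotoneOn f s) (hf' : Continuous f) (hst : MapsTo f s t)
    (hmap : (μ.restrict s).map f = ν.restrict t) :
    ∃ A₁ A₂, A₁ ⊆ s ∧ A₂ ⊆ t ∧ μ A₁ = 0 ∧ ν A₂ = 0 ∧ BijOn f (s \ A₁) (t \ A₂) := by
  set D := {c | ∃ x y, x ∈ s ∧ y ∈ s ∧ x < y ∧ f x = c ∧ f y = c}
  have hD : D.Countable := hf.countable_setOfPred_two_preimages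
  have hmap_apply : ∀ B, MeasurableSet B → ν.restrict t B = μ (f ⁻¹' B ∩ s) := fun B hB => by
    rw [← hmap, Measure.map_apply hf'.measurable hB, Measure.restrict_apply' hs]
  set S := s \ f ⁻¹' D
  have hinj : InjOn f S := by
    intro x hx y hy hxy
    by_contra hne
    rcases lt_or_gt_of_ne hne with h | h
    · exact hx.2 ⟨x, y, hx.1, hy.1, h, rfl, hxy.symm⟩
    · exact hy.2 ⟨y, x, hy.1, hx.1, h, rfl, hxy⟩
  have hSm : MeasurableSet (f '' S) :=
    (hs.diff (hf'.measurable hD.measurableSet)).image_of_continuousOn_injOn hf'.continuousOn hinj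
  have hA₁ : μ (f ⁻¹' D ∩ s) = 0 := by
    rw [← hmap_apply D hD.measurableSet]
    exact hD.measure_zero _
  refine ⟨f ⁻¹' D ∩ s, t \ f '' S, inter_subset_right, sdiff_subset, hA₁, ?_, ?_⟩
  · have hpre : f ⁻¹' (t \ f '' S) ∩ s ⊆ f ⁻¹' D ∩ s := fun x ⟨hx, hxs⟩ =>
      ⟨by_contra fun hxD => hx.2 ⟨x, ⟨hxs, hxD⟩, rfl⟩, hxs⟩
    rw [← Measure.restrict_eq_self ν (sdiff_subset : t \ f '' S ⊆ t), hmap_apply _ (ht.diff hSm)]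
    exact measure_mono_null hpre hA₁
  · rw [sdiff_inter_self_eq_sdiff,
      sdiff_sdiff_cancel_left (image_subset_iff.2 fun x hx => hst hx.1)]
    exact hinj.bijOn_image

theorem volume_inter_Icc_ne_top (E : Set ℝ) (x : ℝ) : volume (E ∩ Icc 0 x) ≠ ⊤ :=
  measure_ne_top_of_subset inter_subset_right measure_Icc_lt_top.ne

theorem lipschitzWith_one_toReal_volume_inter_Icc (E : Set ℝ) :
    LipschitzWith 1 fun x => (volume (E ∩ Icc 0 x)).toReal := by
  refine LipschitzWith.of_le_add fun x y => ?_
  have hsub : E ∩ Icc 0 x ⊆ E ∩ Icc 0 y ∪ Icc y x := fun t ⟨htE, ht0, htx⟩ =>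
    (le_total t y).imp (fun hty => ⟨htE, ht0, hty⟩) fun hyt => ⟨hyt, htx⟩
  calc (volume (E ∩ Icc 0 x)).toReal
      ≤ (volume (E ∩ Icc 0 y) + volume (Icc y x)).toReal :=
        ENNReal.toReal_mono (ENNReal.add_ne_top.2 ⟨volume_inter_Icc_ne_top E y,
          measure_Icc_lt_top.ne⟩) ((measure_mono hsub).trans (measure_union_le _ _))
    _ = (volume (E ∩ Icc 0 y)).toReal + max (x - y) 0 := by
        rw [ENNReal.toReal_add (volume_inter_Icc_ne_top E y) measure_Icc_lt_top.ne,
          Real.volume_Icc, ENNReal.toReal_ofReal']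
    _ ≤ (volume (E ∩ Icc 0 y)).toReal + dist x y := by
        gcongr
        exact max_le (le_abs_self _) dist_nonneg

theorem continuous_rhoMap (E : Set ℝ) : Continuous (rhoMap E) :=
  (lipschitzWith_one_toReal_volume_inter_Icc E).continuous.div_const _

theorem monotone_rhoMap (E : Set ℝ) : Monotone (rhoMap E) := fun _ y hxy =>
  div_le_div_of_nonneg_right (ENNReal.toReal_mono (volume_inter_Icc_ne_top E y)
    (measure_mono (inter_subset_inter_right _ (Icc_subset_Icc_right hxy)))) ENNReal.toReal_nonneg

theorem rhoMap_mem_Icc {E : Set ℝ} (hE : volume E ≠ ⊤) (x : ℝ) : rhoMap E x ∈ Icc 0 1 :=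
  ⟨by unfold rhoMap; positivity, div_le_one_of_le₀
    (ENNReal.toReal_mono hE (measure_mono inter_subset_left)) ENNReal.toReal_nonneg⟩

theorem rhoMap_zero (E : Set ℝ) : rhoMap E 0 = 0 := by
  rw [rhoMap, Icc_self, measure_mono_null inter_subset_right (measure_singleton 0),
    ENNReal.toReal_zero, zero_div]

theorem rhoMap_one {E : Set ℝ} (hE : E ⊆ Icc 0 1) (hE0 : volume E ≠ 0) (hE' : volume E ≠ ⊤) :
    rhoMap E 1 = 1 := by
  rw [rhoMap, inter_eq_left.2 hE, div_self (ENNReal.toReal_ne_zero.2 ⟨hE0, hE'⟩)]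

theorem volume_inter_Icc_eq_ofReal_rhoMap_mul {E : Set ℝ} (hE0 : volume E ≠ 0)
    (hE' : volume E ≠ ⊤) (x : ℝ) :
    volume (E ∩ Icc 0 x) = ENNReal.ofReal (rhoMap E x) * volume E := by
  rw [← ENNReal.ofReal_toReal hE', ← ENNReal.ofReal_mul (rhoMap_mem_Icc hE' x).1, rhoMap,
    div_mul_cancel₀ _ (ENNReal.toReal_ne_zero.2 ⟨hE0, hE'⟩),
    ENNReal.ofReal_toReal (volume_inter_Icc_ne_top E x)]

theorem volume_inter_preimage_rhoMap_Iic {E : Set ℝ} (hE : E ⊆ Icc 0 1) (hE0 : volume E ≠ 0)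
    (hE' : volume E ≠ ⊤) {c : ℝ} (hc : c ∈ Icc 0 1) :
    volume (E ∩ rhoMap E ⁻¹' Iic c) = ENNReal.ofReal c * volume E := by
  obtain ⟨z, hzc, hpre⟩ := (monotone_rhoMap E).monotoneOn _ |>.exists_preimage_Iic_inter_Icc_eq
    (continuous_rhoMap E).continuousOn zero_le_one (by rwa [rhoMap_zero, rhoMap_one hE hE0 hE'])
  have hEz : E ∩ rhoMap E ⁻¹' Iic c = E ∩ Icc 0 z := by
    rw [← hpre, ← inter_assoc, inter_right_comm, inter_eq_left.2 hE]
  rw [hEz, volume_inter_Icc_eq_ofReal_rhoMap_mul hE0 hE' z, hzc]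

theorem map_rhoMap_smul_restrict {E : Set ℝ} (hE : E ⊆ Icc 0 1) (hE0 : volume E ≠ 0)
    (hE' : volume E ≠ ⊤) :
    Measure.map (rhoMap E) ((volume E)⁻¹ • volume.restrict E) = volume.restrict (Icc 0 1) := by
  have hρ := (continuous_rhoMap E).measurable
  refine (Measure.ext_of_Iic _ _ fun a => ?_).symm
  rw [Measure.map_apply hρ measurableSet_Iic, Measure.smul_apply,
    Measure.restrict_apply (hρ measurableSet_Iic), Measure.restrict_apply measurableSet_Iic,
    smul_eq_mul, inter_comm _ E]
  rcases lt_or_ge a 0 with ha | ha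
  · have hρa : E ∩ rhoMap E ⁻¹' Iic a = ∅ :=
      eq_empty_of_forall_notMem fun t ht => ha.not_ge ((rhoMap_mem_Icc hE' t).1.trans ht.2)
    have ha' : Iic a ∩ Icc (0 : ℝ) 1 = ∅ :=
      eq_empty_of_forall_notMem fun t ht => ha.not_ge (ht.2.1.trans ht.1)
    simp [hρa, ha']
  · have hρa : E ∩ rhoMap E ⁻¹' Iic a = E ∩ rhoMap E ⁻¹' Iic (min a 1) := by
      ext t
      simp [(rhoMap_mem_Icc hE' t).2]
    rw [hρa,
      volume_inter_preimage_rhoMap_Iic hE hE0 hE' ⟨le_min ha zero_le_one, min_le_right _ _⟩,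
      mul_comm (ENNReal.ofReal _), ENNReal.inv_mul_cancel_left hE0 hE']
    have ha' : Iic a ∩ Icc (0 : ℝ) 1 = Icc 0 (min a 1) := by
      ext t
      simp only [mem_inter_iff, mem_Iic, mem_Icc, le_min_iff]
      tauto
    rw [ha', Real.volume_Icc, sub_zero]

/-- **The normalized distribution map of a set of positive measure is measure
preserving**: `ρ_E` is a bijection from `E` onto `[0,1]` up to null sets, and
the pushforward under `ρ_E` of the normalized measure `m_E(A) = m(E ∩ A)/m(E)`
equals Lebesgue measure on `[0,1]`. -/
theorem rhoMap_measurePreserving (E : Set ℝ) (hE : E ⊆ Set.Icc 0 1)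
    (hEm : MeasurableSet E) (hE0 : 0 < volume E) :
    (∃ A₁ A₂ : Set ℝ, A₁ ⊆ E ∧ A₂ ⊆ Set.Icc 0 1 ∧
      volume A₁ = 0 ∧ volume A₂ = 0 ∧
      Set.BijOn (rhoMap E) (E \ A₁) (Set.Icc 0 1 \ A₂)) ∧
    Measure.map (rhoMap E) ((volume E)⁻¹ • volume.restrict E) =
      volume.restrict (Set.Icc (0:ℝ) 1) := by
  have hE' : volume E ≠ ⊤ := measure_ne_top_of_subset hE measure_Icc_lt_top.ne
  have hmap := map_rhoMap_smul_restrict hE hE0.ne' hE'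
  refine ⟨?_, hmap⟩
  rw [← Measure.restrict_smul] at hmap
  obtain ⟨A₁, A₂, hA₁E, hA₂, hA₁0, hA₂0, hbij⟩ := exists_bijOn_diff_of_map_restrict_eq hEm
    measurableSet_Icc ((monotone_rhoMap E).monotoneOn E) (continuous_rhoMap E)
    (fun x _ => rhoMap_mem_Icc hE' x) hmap
  exact ⟨A₁, A₂, hA₁E, hA₂, by simpa [hE'] using hA₁0, hA₂0, hbij⟩
end
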